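/- arXiv:1204.3391 — 4 statements merged into one kernel-verified Lean document; each statement's English description precedes it below -/
import Mathlib

section
/- Let N, n, k be natural numbers with 1 ≤ k ≤ n ≤ N, and define Pr'(R) = Σ_{x=k}^{min(R,n)} C(R, x)·C(N − R, n − x) / C(N, n) as a rational number. Then for every R with k ≤ R and R + 1 ≤ N − (n − k), one has Pr'(R + 1) = Pr'(R) + C(R, k − 1)·C(N − R − 1, n − k) / C(N, n). -/
/-! Pascal's rule `C(R+1, x) = C(R, x-1) + C(R, x)` splits each term of `Pr'(R+1)`, and Pascal's
rule on the other factor splits each term of `Pr'(R)`. After the shift `x ↦ x - 1` all pieces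
cancel except the single term `C(R, k-1) C(N-R-1, n-k)`, the event that the `(R+1)`-st received
symbol is the `k`-th one of the layer. -/

open Finset

lemma Finset.sum_Icc_min_of_eq_zero {M : Type*} [AddCommMonoid M] {f : ℕ → M} {a : ℕ}
    (hf : ∀ x, a < x → f x = 0) (k n : ℕ) :
    ∑ x ∈ Icc k (min a n), f x = ∑ x ∈ Icc k n, f x :=
  sum_subset (Icc_subset_Icc_right (min_le_right a n)) fun x hx hx' => by
    simp only [mem_Icc] at hx hx'
    exact hf x (by omega)

lemma Finset.sum_Icc_eq_sum_range_add {M : Type*} [AddCommMonoid M] (f : ℕ → M) (k m : ℕ) :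
    ∑ x ∈ Icc k (k + m), f x = ∑ i ∈ range (m + 1), f (k + i) := by
  rw [← Ico_add_one_right_eq_Icc, sum_Ico_eq_sum_range, show k + m + 1 - k = m + 1 by omega]

lemma Nat.sum_range_mul_choose_succ (u : ℕ → ℕ) (b m : ℕ) :
    ∑ i ∈ range (m + 1), u i * (b + 1).choose (m - i) =
      ∑ i ∈ range (m + 1), u i * b.choose (m - i) + ∑ i ∈ range m, u i * b.choose (m - 1 - i) := by
  have pascal : ∀ i ∈ range m,
      u i * (b + 1).choose (m - i) = u i * b.choose (m - i) + u i * b.choose (m - 1 - i) := by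
    intro i hi
    rw [mem_range] at hi
    rw [show m - i = m - 1 - i + 1 by omega, Nat.choose_succ_succ', mul_add, add_comm]
  rw [sum_range_succ, sum_congr rfl pascal, sum_add_distrib, sum_range_succ _ m]
  simp only [Nat.sub_self, Nat.choose_zero_right]
  ring

lemma Nat.sum_range_choose_succ_mul_choose (a b j m : ℕ) :
    ∑ i ∈ range (m + 1), (a + 1).choose (j + 1 + i) * b.choose (m - i) =
      ∑ i ∈ range (m + 1), a.choose (j + 1 + i) * (b + 1).choose (m - i) +
        a.choose j * b.choose m := by
  have pascal : ∀ i ∈ range (m + 1), (a + 1).choose (j + 1 + i) * b.choose (m - i) =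
      a.choose (j + i) * b.choose (m - i) + a.choose (j + 1 + i) * b.choose (m - i) := by
    intro i _
    rw [show j + 1 + i = j + i + 1 by omega, Nat.choose_succ_succ', add_mul]
  have shift : ∑ i ∈ range (m + 1), a.choose (j + i) * b.choose (m - i) =
      ∑ i ∈ range m, a.choose (j + 1 + i) * b.choose (m - 1 - i) + a.choose j * b.choose m := by
    rw [sum_range_succ']
    refine congrArg (· + _) (sum_congr rfl fun i _ => ?_)
    rw [show j + (i + 1) = j + 1 + i by omega, show m - (i + 1) = m - 1 - i by omega]
  rw [sum_congr rfl pascal, sum_add_distrib, shift, Nat.sum_range_mul_choose_succ]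
  ring

lemma Nat.sum_Icc_choose_succ_mul_choose {k n : ℕ} (hk : 1 ≤ k) (hkn : k ≤ n) (a b : ℕ) :
    ∑ x ∈ Icc k n, (a + 1).choose x * b.choose (n - x) =
      ∑ x ∈ Icc k n, a.choose x * (b + 1).choose (n - x) + a.choose (k - 1) * b.choose (n - k) := by
  obtain ⟨j, rfl⟩ : ∃ j, k = j + 1 := ⟨k - 1, by omega⟩
  obtain ⟨m, rfl⟩ : ∃ m, n = j + 1 + m := ⟨n - (j + 1), by omega⟩
  have hsub : ∀ i, j + 1 + m - (j + 1 + i) = m - i := fun i => by omega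
  simp only [sum_Icc_eq_sum_range_add, hsub, Nat.add_sub_cancel, Nat.add_sub_cancel_left]
  exact Nat.sum_range_choose_succ_mul_choose a b j m

theorem sp_fec_recovery_succ_general (N n k : ℕ)
    (hk : 1 ≤ k) (hkn : k ≤ n)
    (Pr' : ℕ → ℚ)
    (hPr : ∀ R, Pr' R = ∑ x ∈ Finset.Icc k (min R n),
        (R.choose x * (N - R).choose (n - x) : ℚ) / N.choose n)
    (R : ℕ) (hR : R + 1 ≤ N - (n - k)) :
    Pr' (R + 1) = Pr' R + (R.choose (k - 1) * (N - R - 1).choose (n - k) : ℚ) / N.choose n := by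
  have outside_zero : ∀ S x, S < x → (S.choose x * (N - S).choose (n - x) : ℚ) / N.choose n = 0 :=
    fun S x hx => by simp [Nat.choose_eq_zero_of_lt hx]
  rw [hPr, hPr, sum_Icc_min_of_eq_zero (outside_zero _), sum_Icc_min_of_eq_zero (outside_zero _),
    ← sum_div, ← sum_div, ← add_div]
  congr 1
  obtain ⟨b, hb⟩ : ∃ b, N - R = b + 1 := ⟨N - R - 1, by omega⟩
  rw [show N - (R + 1) = b by omega, show N - R - 1 = b by omega, hb]
  exact_mod_cast Nat.sum_Icc_choose_succ_mul_choose hk hkn R b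

/-- Recurrence for the SP-FEC layer recovery probability:
`Pr'(R + 1) = Pr'(R) + C(R, k - 1) * C(N - R - 1, n - k) / C(N, n)`
for `k ≤ R` and `R + 1 ≤ N - (n - k)`. -/
theorem sp_fec_recovery_succ (N n k : ℕ)
    (hk : 1 ≤ k) (hkn : k ≤ n) (hnN : n ≤ N)
    (Pr' : ℕ → ℚ)
    (hPr : ∀ R, Pr' R = ∑ x ∈ Finset.Icc k (min R n),
        (R.choose x * (N - R).choose (n - x) : ℚ) / N.choose n)
    (R : ℕ) (hkR : k ≤ R) (hR : R + 1 ≤ N - (n - k)) :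
    Pr' (R + 1) = Pr' R + (R.choose (k - 1) * (N - R - 1).choose (n - k) : ℚ) / N.choose n :=
  sp_fec_recovery_succ_general N n k hk hkn Pr' hPr R hR
end

section
/- (Lemma 1, strict part) Let N, n, k be natural numbers with 1 ≤ k ≤ n ≤ N, and define Pr'(R) = Σ_{x=k}^{min(R,n)} C(R, x)·C(N − R, n − x) / C(N, n) as a rational number. Then for every R with k ≤ R and R + 1 ≤ N − (n − k), one has Pr'(R + 1) > Pr'(R); that is, Pr' is strictly increasing on the range k ≤ R < N − (n − k). -/
open Finset

private lemma extend_sum (N n k R : ℕ) (hk : 1 ≤ k) :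
    ∑ x ∈ Finset.Icc k (min R n), (R.choose x * (N - R).choose (n - x) : ℚ)
      = ∑ x ∈ Finset.Icc k n, (R.choose x * (N - R).choose (n - x) : ℚ) := by
  apply Finset.sum_subset
  · intro x hx
    simp only [Finset.mem_Icc] at hx ⊢
    exact ⟨hx.1, le_trans hx.2 (min_le_right _ _)⟩
  · intro x hx hx'
    simp only [Finset.mem_Icc] at hx hx'
    have hRx : R < x := by
      rcases le_or_gt x R with h | h
      · exact absurd ⟨hx.1, le_min h hx.2⟩ hx'
      · exact h
    rw [Nat.choose_eq_zero_of_lt hRx]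
    simp

private lemma key_diff (N n k R : ℕ)
    (hk : 1 ≤ k) (hkn : k ≤ n) (hRN : R + 1 ≤ N) :
    ∑ x ∈ Finset.Icc k n, ((R+1).choose x * (N - (R+1)).choose (n - x) : ℚ)
      = (∑ x ∈ Finset.Icc k n, (R.choose x * (N - R).choose (n - x) : ℚ))
        + R.choose (k-1) * (N - (R+1)).choose (n - k) := by
  set M := N - (R + 1) with hM
  have hNR : N - R = M + 1 := by omega
  set h : ℕ → ℚ := fun x => if x ≤ n then (R.choose (x-1) * M.choose (n-x) : ℚ) else 0
    with hh
  have hpt : ∀ x ∈ Finset.Icc k n,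
      ((R+1).choose x * (M).choose (n - x) : ℚ)
        - (R.choose x * (N - R).choose (n - x) : ℚ) = h x - h (x + 1) := by
    intro x hx
    simp only [Finset.mem_Icc] at hx
    obtain ⟨hkx, hxn⟩ := hx
    obtain ⟨y, rfl⟩ : ∃ y, x = y + 1 := ⟨x - 1, by omega⟩
    rcases eq_or_lt_of_le hxn with heq | hlt
    · -- x = n
      subst heq
      have h1 : h (y+1) = (R.choose y * M.choose 0 : ℚ) := by
        simp [hh]
      have h2 : h (y+1+1) = 0 := by simp [hh]
      rw [h1, h2]
      rw [Nat.choose_succ_succ, Nat.sub_self]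
      simp only [Nat.choose_zero_right, Nat.cast_one, Nat.succ_eq_add_one, Nat.add_comm 1 y]
      push_cast
      ring
    · -- x < n
      have h1 : h (y+1) = (R.choose y * M.choose (n-(y+1)) : ℚ) := by
        simp [hh, le_of_lt hlt]
      have h2 : h (y+1+1) = (R.choose (y+1) * M.choose (n-(y+2)) : ℚ) := by
        have : y + 1 + 1 ≤ n := by omega
        simp [hh, this]
      rw [h1, h2]
      have hsub : n - (y+1) = (n - (y+2)) + 1 := by omega
      rw [Nat.choose_succ_succ, hNR, hsub, Nat.choose_succ_succ]
      push_cast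
      ring
  have htel : ∑ x ∈ Finset.Icc k n, (h x - h (x+1)) = h k - h (n+1) := by
    rw [show Finset.Icc k n = Finset.Ico k (n+1) by rw [Finset.Ico_add_one_right_eq_Icc],
      Finset.sum_Ico_eq_sum_range]
    have := Finset.sum_range_sub' (fun i => h (k + i)) (n + 1 - k)
    simp only [add_zero] at this
    rw [show k + (n + 1 - k) = n + 1 by omega] at this
    rw [← this]
    apply Finset.sum_congr rfl
    intro i _
    congr 1
  have hexp : ∑ x ∈ Finset.Icc k n, ((R+1).choose x * M.choose (n - x) : ℚ)
      - ∑ x ∈ Finset.Icc k n, (R.choose x * (N - R).choose (n - x) : ℚ)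
      = h k - h (n+1) := by
    rw [← Finset.sum_sub_distrib, ← htel]
    exact Finset.sum_congr rfl hpt
  have hk1 : h k = (R.choose (k-1) * M.choose (n-k) : ℚ) := by
    simp [hh, hkn]
  have hk2 : h (n+1) = 0 := by simp [hh]
  rw [hk1, hk2] at hexp
  linarith

/-- Lemma 1 (strict part): the SP-FEC layer recovery probability `Pr'` is strictly
increasing on the range `k ≤ R < N - (n - k)`. -/
theorem sp_fec_recovery_strictMono (N n k : ℕ)
    (hk : 1 ≤ k) (hkn : k ≤ n) (hnN : n ≤ N)
    (Pr' : ℕ → ℚ)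
    (hPr : ∀ R, Pr' R = ∑ x ∈ Finset.Icc k (min R n),
        (R.choose x * (N - R).choose (n - x) : ℚ) / N.choose n)
    (R : ℕ) (hkR : k ≤ R) (hR : R + 1 ≤ N - (n - k)) :
    Pr' R < Pr' (R + 1) := by
  have hRN : R + 1 ≤ N := by omega
  have hc : (0 : ℚ) < N.choose n := by
    exact_mod_cast Nat.choose_pos hnN
  have hd : (0 : ℚ) < R.choose (k-1) * (N - (R+1)).choose (n - k) := by
    have h1 : 0 < R.choose (k-1) := Nat.choose_pos (by omega)
    have h2 : 0 < (N - (R+1)).choose (n - k) := Nat.choose_pos (by omega)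
    exact_mod_cast Nat.mul_pos h1 h2
  rw [hPr R, hPr (R+1), ← Finset.sum_div, ← Finset.sum_div,
    extend_sum N n k R hk, extend_sum N n k (R+1) hk,
    key_diff N n k R hk hkn hRN,
    div_lt_div_iff_of_pos_right hc]
  linarith
end

section
/- (Lemma 1) Let N, n, k be natural numbers with 1 ≤ k ≤ n ≤ N, and define the piecewise function Pr'(R) for 0 ≤ R ≤ N by: Pr'(R) = 0 if R < k; Pr'(R) = Σ_{x=k}^{min(R,n)} C(R, x)·C(N − R, n − x) / C(N, n) if k ≤ R < N − (n − k); and Pr'(R) = 1 if R ≥ N − (n − k). Then Pr' is a non-decreasing function of R on {0, 1, …, N}. -/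
/-!
`vandermondeTail a b n k = ∑_{x=k}^{n} C(a,x) C(b,n-x)` counts the `n`-subsets of an
`(a+b)`-set that meet a fixed `a`-subset in at least `k` points, so `Pr' R` is this count for
`a = R`, `b = N - R`, divided by `C(N,n)`; the three branches of `Pr'` all agree with that
quotient, since the count vanishes for `R < k` and is all of `C(N,n)` once `N - R ≤ n - k`.
Moving one point from the `b`-part to the `a`-part can only increase the count: by Pascal's
rule the complementary head `∑_{x<k} C(a,x) C(b,n-x)` drops by exactly
`C(a,k-1) C(b,n-k)`, while head plus tail is Vandermonde's `C(a+b,n)`.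
-/

open Finset

def vandermondeHead (a b n k : ℕ) : ℕ :=
  ∑ x ∈ range k, a.choose x * b.choose (n - x)

def vandermondeTail (a b n k : ℕ) : ℕ :=
  ∑ x ∈ Icc k n, a.choose x * b.choose (n - x)

theorem vandermondeHead_add_vandermondeTail {a b n k : ℕ} (hk : k ≤ n + 1) :
    vandermondeHead a b n k + vandermondeTail a b n k = (a + b).choose n := by
  rw [Nat.add_choose_eq, Nat.sum_antidiagonal_eq_sum_range_succ_mk, vandermondeHead,
    vandermondeTail, ← Ico_add_one_right_eq_Icc, sum_range_add_sum_Ico _ hk]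

theorem vandermondeHead_succ (a b n k : ℕ) :
    vandermondeHead a b n (k + 1) = vandermondeHead a b n k + a.choose k * b.choose (n - k) :=
  sum_range_succ _ _

theorem vandermondeHead_succ_left_add {a b n k : ℕ} (hk : k < n) :
    vandermondeHead (a + 1) b n (k + 1) + a.choose k * b.choose (n - (k + 1)) =
      vandermondeHead a (b + 1) n (k + 1) := by
  induction k with
  | zero =>
    obtain ⟨m, rfl⟩ := Nat.exists_eq_add_of_lt hk
    simp [vandermondeHead, Nat.choose_succ_succ, add_comm]
  | succ k ih =>
    have hsplit : n - (k + 1) = n - (k + 2) + 1 := by omega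
    rw [vandermondeHead_succ, vandermondeHead_succ a, ← ih (by omega), hsplit,
      Nat.choose_succ_succ' a, Nat.choose_succ_succ' b]
    ring

theorem vandermondeHead_succ_left_le {a b n k : ℕ} (hk : k ≤ n) :
    vandermondeHead (a + 1) b n k ≤ vandermondeHead a (b + 1) n k := by
  cases k with
  | zero => simp [vandermondeHead]
  | succ k => exact (vandermondeHead_succ_left_add hk).symm ▸ Nat.le_add_right _ _

theorem vandermondeTail_le_succ_left {a b n k : ℕ} (hk : k ≤ n) :
    vandermondeTail a (b + 1) n k ≤ vandermondeTail (a + 1) b n k := by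
  have h₁ := vandermondeHead_add_vandermondeTail (a := a) (b := b + 1) (n := n) (k := k) (by omega)
  have h₂ := vandermondeHead_add_vandermondeTail (a := a + 1) (b := b) (n := n) (k := k) (by omega)
  have := vandermondeHead_succ_left_le (a := a) (b := b) hk
  rw [← add_assoc] at h₁
  rw [add_right_comm] at h₂
  omega

theorem vandermondeTail_eq_zero {a b n k : ℕ} (ha : a < k) : vandermondeTail a b n k = 0 :=
  sum_eq_zero fun x hx => by
    rw [Nat.choose_eq_zero_of_lt (by simp at hx; omega), zero_mul]

theorem vandermondeHead_eq_zero {a b n k : ℕ} (hb : b + k ≤ n) : vandermondeHead a b n k = 0 :=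
  sum_eq_zero fun x hx => by
    rw [Nat.choose_eq_zero_of_lt (n := b) (by simp at hx; omega), mul_zero]

theorem vandermondeTail_le_of_le {N n k a a' : ℕ} (hk : k ≤ n) (ha : a ≤ a') (ha' : a' ≤ N) :
    vandermondeTail a (N - a) n k ≤ vandermondeTail a' (N - a') n k := by
  induction a', ha using Nat.le_induction with
  | base => rfl
  | succ a' _ ih =>
    refine (ih (by omega)).trans ?_
    rw [show N - a' = N - (a' + 1) + 1 by omega]
    exact vandermondeTail_le_succ_left hk

theorem vandermondeTail_eq_choose {N n k a : ℕ} (hk : k ≤ n) (ha : N - (n - k) ≤ a)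
    (haN : a ≤ N) : vandermondeTail a (N - a) n k = N.choose n := by
  have h := vandermondeHead_add_vandermondeTail (a := a) (b := N - a) (n := n) (k := k) (by omega)
  rwa [vandermondeHead_eq_zero (by omega), zero_add, Nat.add_sub_cancel' haN] at h

theorem cast_sum_Icc_min_eq_vandermondeTail (a b n k : ℕ) :
    ∑ x ∈ Icc k (min a n), (a.choose x * b.choose (n - x) : ℚ) = vandermondeTail a b n k := by
  rw [vandermondeTail]
  push_cast
  refine sum_subset (Icc_subset_Icc_right (min_le_right a n)) fun x hx hx' => ?_
  simp only [mem_Icc] at hx hx'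
  rw [Nat.choose_eq_zero_of_lt (by omega : a < x), Nat.cast_zero, zero_mul]

theorem sp_fec_recovery_monotone_general (N n k : ℕ)
    (hkn : k ≤ n) (hnN : n ≤ N)
    (Pr' : ℕ → ℚ)
    (hPr : ∀ R, Pr' R =
      if R < k then 0
      else if R < N - (n - k) then
        ∑ x ∈ Finset.Icc k (min R n),
          (R.choose x * (N - R).choose (n - x) : ℚ) / N.choose n
      else 1) :
    ∀ R S : ℕ, R ≤ S → S ≤ N → Pr' R ≤ Pr' S := by
  have hC : (0 : ℚ) < N.choose n := by exact_mod_cast Nat.choose_pos hnN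
  have hPr_eq : ∀ R ≤ N, Pr' R = vandermondeTail R (N - R) n k / N.choose n := by
    intro R hR
    rw [hPr R]
    split_ifs with h₁ h₂
    · rw [vandermondeTail_eq_zero h₁, Nat.cast_zero, zero_div]
    · rw [← sum_div, cast_sum_Icc_min_eq_vandermondeTail]
    · rw [vandermondeTail_eq_choose hkn (not_lt.mp h₂) hR, div_self hC.ne']
  intro R S hRS hSN
  rw [hPr_eq R (hRS.trans hSN), hPr_eq S hSN]
  gcongr
  exact vandermondeTail_le_of_le hkn hRS hSN

/-- Lemma 1: the piecewise SP-FEC layer recovery probability `Pr'` is a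
non-decreasing function of the number of received symbols `R` on `{0, 1, …, N}`. -/
theorem sp_fec_recovery_monotone (N n k : ℕ)
    (hk : 1 ≤ k) (hkn : k ≤ n) (hnN : n ≤ N)
    (Pr' : ℕ → ℚ)
    (hPr : ∀ R, Pr' R =
      if R < k then 0
      else if R < N - (n - k) then
        ∑ x ∈ Finset.Icc k (min R n),
          (R.choose x * (N - R).choose (n - x) : ℚ) / N.choose n
      else 1) :
    ∀ R S : ℕ, R ≤ S → S ≤ N → Pr' R ≤ Pr' S :=
  sp_fec_recovery_monotone_general N n k hkn hnN Pr' hPr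
end

section
/- (Lemma 3) Fix real numbers r, η, r_i with 0 < η ≤ 1 and 0 < r_i < r ≤ 1. For each positive integer N, set n_N = ⌊N·η⌋, R_N = ⌊N·r⌋, k_N = ⌈N·η·r_i⌉, and define the hypergeometric tail probability Pr'_N = Σ_{x=k_N}^{min(R_N, n_N)} C(R_N, x)·C(N − R_N, n_N − x) / C(N, n_N) (a rational number, viewed as a real). Then Pr'_N tends to 1 as N → ∞. -/
/-!
`Pr'_N` is `P(X ≥ k_N)` for a hypergeometric variable `X` (the number of marked items among
`n` drawn without replacement from `N` items, `R` of them marked). The factorial moments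
`E[X⁽ᵐ⁾] N⁽ᵐ⁾ = n⁽ᵐ⁾ R⁽ᵐ⁾` give the mean `μ = nR/N` and `E[X(X-1)] ≤ μ²`, hence `Var X ≤ μ`,
and Chebyshev's inequality bounds `P(X < k)` by `μ / (μ - k)²`. Since `μ ~ Nηr` and
`k_N ~ Nηr_i` with `r_i < r`, this bound is `O(1/N)`.
-/

open Filter Topology Finset

namespace Nat

theorem sum_range_descFactorial_mul_choose_mul_choose (R M n m : ℕ) :
    (∑ x ∈ range (n + 1), x.descFactorial m * R.choose x * M.choose (n - x)) *
        (R + M).descFactorial m =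
      n.descFactorial m * R.descFactorial m * (R + M).choose n := by
  induction m generalizing R n with
  | zero =>
    simp only [descFactorial_zero, one_mul, mul_one]
    rw [add_choose_eq, Finset.Nat.sum_antidiagonal_eq_sum_range_succ
      (fun i j => R.choose i * M.choose j)]
  | succ m ih =>
    rcases R with _ | R
    · rw [sum_eq_zero fun x _ => by cases x <;> simp]
      simp
    rcases n with _ | n
    · simp
    have hshift : ∑ x ∈ range (n + 1 + 1),
        x.descFactorial (m + 1) * (R + 1).choose x * M.choose (n + 1 - x) =
          (R + 1) * ∑ x ∈ range (n + 1), x.descFactorial m * R.choose x * M.choose (n - x) := by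
      rw [sum_range_succ', mul_sum, zero_descFactorial_succ, zero_mul, zero_mul, add_zero]
      refine sum_congr rfl fun x _ => ?_
      calc (x + 1).descFactorial (m + 1) * (R + 1).choose (x + 1) * M.choose (n + 1 - (x + 1))
          = x.descFactorial m * ((R + 1).choose (x + 1) * (x + 1)) * M.choose (n - x) := by
            rw [succ_descFactorial_succ, Nat.add_sub_add_right]; ring
        _ = _ := by rw [← add_one_mul_choose_eq]; ring
    calc _ = (R + 1) * ((∑ x ∈ range (n + 1), x.descFactorial m * R.choose x * M.choose (n - x))
          * (R + M).descFactorial m) * (R + M + 1) := by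
          rw [hshift, R.add_right_comm, succ_descFactorial_succ]; ring
      _ = (R + 1) * (n.descFactorial m * R.descFactorial m * ((R + M + 1) * (R + M).choose n)) := by
          rw [ih]; ring
      _ = _ := by rw [add_one_mul_choose_eq, succ_descFactorial_succ, succ_descFactorial_succ,
          R.add_right_comm]; ring

end Nat

/-- Chebyshev's inequality for weights whose second factorial moment is at most the squared
mean, so that the variance is at most the mean. -/
theorem Finset.sum_filter_lt_le_of_sum_mul_sub_one_le {ι : Type*} {s : Finset ι} {w f : ι → ℝ}
    (hw : ∀ i ∈ s, 0 ≤ w i) (hw1 : ∑ i ∈ s, w i = 1)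
    (hf : ∑ i ∈ s, w i * (f i * (f i - 1)) ≤ (∑ i ∈ s, w i * f i) ^ 2) {k : ℝ}
    (hk : k < ∑ i ∈ s, w i * f i) :
    ∑ i ∈ s with f i < k, w i ≤ (∑ i ∈ s, w i * f i) / (∑ i ∈ s, w i * f i - k) ^ 2 := by
  set μ := ∑ i ∈ s, w i * f i with hμ
  have hvar : ∑ i ∈ s, w i * (f i - μ) ^ 2 ≤ μ := by
    have : ∑ i ∈ s, w i * (f i - μ) ^ 2 =
        ∑ i ∈ s, w i * (f i * (f i - 1)) + (1 - 2 * μ) * ∑ i ∈ s, w i * f i +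
          μ ^ 2 * ∑ i ∈ s, w i := by
      simp only [mul_sum, ← sum_add_distrib]
      exact sum_congr rfl fun i _ => by ring
    rw [this, hw1, ← hμ]
    linarith
  have hcheb : (∑ i ∈ s with f i < k, w i) * (μ - k) ^ 2 ≤ ∑ i ∈ s, w i * (f i - μ) ^ 2 := by
    rw [sum_mul]
    calc ∑ i ∈ s with f i < k, w i * (μ - k) ^ 2
        ≤ ∑ i ∈ s with f i < k, w i * (f i - μ) ^ 2 := by
          refine sum_le_sum fun i hi => ?_
          obtain ⟨his, hik⟩ := mem_filter.1 hi
          exact mul_le_mul_of_nonneg_left (by nlinarith) (hw i his)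
      _ ≤ ∑ i ∈ s, w i * (f i - μ) ^ 2 :=
          sum_le_sum_of_subset_of_nonneg (filter_subset _ _)
            fun i hi _ => mul_nonneg (hw i hi) (sq_nonneg _)
  rw [le_div_iff₀ (by nlinarith)]
  linarith

/-- `P(X = x)` for `X` hypergeometric with population `N`, `R` marked items and `n` draws. -/
noncomputable def hypergeom (N R n x : ℕ) : ℝ :=
  (R.choose x * (N - R).choose (n - x) : ℝ) / N.choose n

section Hypergeometric

variable {N R n : ℕ}

theorem hypergeom_nonneg (x : ℕ) : 0 ≤ hypergeom N R n x := by
  unfold hypergeom; positivity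

theorem sum_range_hypergeom_mul_descFactorial (hR : R ≤ N) (hn : n ≤ N) (m : ℕ) :
    (∑ x ∈ range (n + 1), hypergeom N R n x * x.descFactorial m) * N.descFactorial m =
      n.descFactorial m * R.descFactorial m := by
  have h := Nat.sum_range_descFactorial_mul_choose_mul_choose R (N - R) n m
  rw [Nat.add_sub_cancel' hR] at h
  have hC : (N.choose n : ℝ) ≠ 0 := by exact_mod_cast (Nat.choose_pos hn).ne'
  have hsum : ∑ x ∈ range (n + 1), hypergeom N R n x * x.descFactorial m =
      ((∑ x ∈ range (n + 1), x.descFactorial m * R.choose x * (N - R).choose (n - x) : ℕ) : ℝ) /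
        N.choose n := by
    push_cast
    rw [sum_div]
    exact sum_congr rfl fun x _ => by simp only [hypergeom]; ring
  rw [hsum, div_mul_eq_mul_div, div_eq_iff hC]
  exact_mod_cast h

theorem sum_range_hypergeom (hR : R ≤ N) (hn : n ≤ N) :
    ∑ x ∈ range (n + 1), hypergeom N R n x = 1 := by
  simpa using sum_range_hypergeom_mul_descFactorial hR hn 0

theorem sum_range_hypergeom_mul (hR : R ≤ N) (hn : n ≤ N) :
    ∑ x ∈ range (n + 1), hypergeom N R n x * x = n * R / N := by
  rcases Nat.eq_zero_or_pos N with rfl | hN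
  · obtain rfl : n = 0 := by omega
    simp
  rw [eq_div_iff (by positivity)]
  simpa using sum_range_hypergeom_mul_descFactorial hR hn 1

theorem sum_range_hypergeom_mul_mul_sub_one_le (hR : R ≤ N) (hn : n ≤ N) :
    ∑ x ∈ range (n + 1), hypergeom N R n x * (x * (x - 1)) ≤
      (∑ x ∈ range (n + 1), hypergeom N R n x * x) ^ 2 := by
  rcases lt_or_ge R 2 with hR2 | hR2
  · rw [sum_eq_zero fun x _ => ?_]
    · positivity
    rcases lt_or_ge x 2 with hx | hx
    · interval_cases x <;> simp
    · simp [hypergeom, Nat.choose_eq_zero_of_lt (hR2.trans_le hx)]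
  have hD : (0 : ℝ) < N.descFactorial 2 * N ^ 2 := by
    have : 0 < N.descFactorial 2 :=
      Nat.pos_of_ne_zero (Nat.descFactorial_eq_zero_iff_lt.not.2 (by omega))
    have : 0 < N := by omega
    positivity
  have h1 := sum_range_hypergeom_mul_descFactorial hR hn 1
  have h2 := sum_range_hypergeom_mul_descFactorial hR hn 2
  simp only [Nat.descFactorial_one] at h1
  simp only [Nat.cast_descFactorial_two] at h2 hD
  have hmoments : n * (n - 1) * (R * (R - 1)) * N ^ 2 ≤ (n ^ 2 * R ^ 2 * (N * (N - 1)) : ℝ) := by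
    have hRN : (R : ℝ) ≤ N := by exact_mod_cast hR
    have hR1 : (1 : ℝ) ≤ R := by exact_mod_cast (by omega : 1 ≤ R)
    have : 0 ≤ (n * R * N : ℝ) * (n * (N - R) + N * (R - 1)) := by
      have : (0 : ℝ) ≤ N - R := by linarith
      have : (0 : ℝ) ≤ R - 1 := by linarith
      positivity
    linarith [show (n ^ 2 * R ^ 2 * (N * (N - 1)) : ℝ) - n * (n - 1) * (R * (R - 1)) * N ^ 2 =
      (n * R * N) * (n * (N - R) + N * (R - 1)) by ring]
  refine le_of_mul_le_mul_right ?_ hD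
  calc _ = (∑ x ∈ range (n + 1), hypergeom N R n x * (x * (x - 1))) * (N * (N - 1)) * N ^ 2 := by
        ring
    _ = n * (n - 1) * (R * (R - 1)) * N ^ 2 := by rw [h2]
    _ ≤ n ^ 2 * R ^ 2 * (N * (N - 1)) := hmoments
    _ = ((∑ x ∈ range (n + 1), hypergeom N R n x * x) * N) ^ 2 * (N * (N - 1)) := by rw [h1]; ring
    _ = _ := by ring

theorem sum_filter_lt_hypergeom_le (hR : R ≤ N) (hn : n ≤ N) {k : ℕ} (hk : k < n * R / (N : ℝ)) :
    ∑ x ∈ range (n + 1) with x < k, hypergeom N R n x ≤ (n * R / N) / (n * R / N - k) ^ 2 := by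
  rw [← sum_range_hypergeom_mul hR hn] at hk ⊢
  simpa only [Nat.cast_lt] using sum_filter_lt_le_of_sum_mul_sub_one_le
    (fun x _ => hypergeom_nonneg x) (sum_range_hypergeom hR hn)
    (sum_range_hypergeom_mul_mul_sub_one_le hR hn) hk

theorem sum_Icc_hypergeom (hR : R ≤ N) (hn : n ≤ N) (k : ℕ) :
    ∑ x ∈ Icc k (min R n), hypergeom N R n x =
      1 - ∑ x ∈ range (n + 1) with x < k, hypergeom N R n x := by
  rw [← sum_range_hypergeom hR hn, ← sum_filter_add_sum_filter_not (range (n + 1)) (· < k),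
    add_sub_cancel_left]
  refine sum_subset (fun x hx => ?_) fun x hx hx' => ?_
  · simp only [mem_Icc] at hx
    simp only [mem_filter, mem_range]
    omega
  · simp only [mem_Icc, mem_filter, mem_range] at hx hx'
    simp [hypergeom, Nat.choose_eq_zero_of_lt (by omega : R < x)]

end Hypergeometric

theorem eventually_lt_of_tendsto_div_natCast {a b : ℕ → ℝ} {α β : ℝ}
    (ha : Tendsto (fun N ↦ a N / N) atTop (𝓝 α)) (hb : Tendsto (fun N ↦ b N / N) atTop (𝓝 β))
    (hβα : β < α) : ∀ᶠ N in atTop, b N < a N := by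
  filter_upwards [(ha.sub hb).eventually (lt_mem_nhds (sub_pos.2 hβα)), eventually_gt_atTop 0]
    with N h hN
  rw [← sub_div, div_pos_iff_of_pos_right (by exact_mod_cast hN)] at h
  linarith

theorem tendsto_div_sub_sq_of_tendsto_div_natCast {a b : ℕ → ℝ} {α β : ℝ}
    (ha : Tendsto (fun N ↦ a N / N) atTop (𝓝 α)) (hb : Tendsto (fun N ↦ b N / N) atTop (𝓝 β))
    (hβα : β < α) : Tendsto (fun N ↦ a N / (a N - b N) ^ 2) atTop (𝓝 0) := by
  have h : Tendsto (fun N : ℕ ↦ a N / N / (a N / N - b N / N) ^ 2 * (1 / N)) atTop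
      (𝓝 (α / (α - β) ^ 2 * 0)) :=
    (ha.div ((ha.sub hb).pow 2) (pow_ne_zero 2 (sub_ne_zero.2 hβα.ne'))).mul
      tendsto_one_div_atTop_nhds_zero_nat
  rw [mul_zero] at h
  refine h.congr' ((eventually_gt_atTop 0).mono fun N hN => ?_)
  have : (N : ℝ) ≠ 0 := by exact_mod_cast hN.ne'
  rw [← sub_div, div_pow, div_div_eq_mul_div]
  field_simp

theorem tendsto_nat_floor_natCast_mul_div {a : ℝ} (ha : 0 ≤ a) :
    Tendsto (fun N : ℕ ↦ (⌊(N : ℝ) * a⌋₊ : ℝ) / N) atTop (𝓝 a) :=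
  ((tendsto_nat_floor_mul_div_atTop ha).comp tendsto_natCast_atTop_atTop).congr fun N => by
    rw [Function.comp_apply, mul_comm]

theorem tendsto_nat_ceil_natCast_mul_div {a : ℝ} (ha : 0 ≤ a) :
    Tendsto (fun N : ℕ ↦ (⌈(N : ℝ) * a⌉₊ : ℝ) / N) atTop (𝓝 a) :=
  ((tendsto_nat_ceil_mul_div_atTop ha).comp tendsto_natCast_atTop_atTop).congr fun N => by
    rw [Function.comp_apply, mul_comm]

/-- Lemma 3: for a fixed received ratio `r` exceeding the layer's code rate `r_i`,
the SP-FEC recovery probability `Pr'_N` (with `n_N = ⌊N·η⌋`, `R_N = ⌊N·r⌋`,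
`k_N = ⌈N·η·r_i⌉`) tends to `1` as the output block size `N → ∞`. -/
theorem sp_fec_recovery_tendsto_one (r η ri : ℝ)
    (hη0 : 0 < η) (hη1 : η ≤ 1) (hri0 : 0 < ri) (hrir : ri < r) (hr1 : r ≤ 1) :
    Tendsto (fun N : ℕ =>
        ∑ x ∈ Finset.Icc (⌈(N : ℝ) * η * ri⌉₊) (min (⌊(N : ℝ) * r⌋₊) (⌊(N : ℝ) * η⌋₊)),
          ((⌊(N : ℝ) * r⌋₊).choose x * (N - ⌊(N : ℝ) * r⌋₊).choose (⌊(N : ℝ) * η⌋₊ - x) : ℝ)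
            / N.choose ⌊(N : ℝ) * η⌋₊)
      atTop (nhds 1) := by
  have floor_le {a : ℝ} (ha : a ≤ 1) (N : ℕ) : ⌊(N : ℝ) * a⌋₊ ≤ N :=
    Nat.floor_le_of_le (mul_le_of_le_one_right N.cast_nonneg ha)
  have hmean : Tendsto (fun N : ℕ ↦ (⌊(N : ℝ) * η⌋₊ * ⌊(N : ℝ) * r⌋₊ / N : ℝ) / N) atTop
      (𝓝 (η * r)) :=
    ((tendsto_nat_floor_natCast_mul_div hη0.le).mul
      (tendsto_nat_floor_natCast_mul_div (hri0.trans hrir).le)).congr fun N => by ring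
  have hk : Tendsto (fun N : ℕ ↦ (⌈(N : ℝ) * η * ri⌉₊ : ℝ) / N) atTop (𝓝 (η * ri)) := by
    simpa only [mul_assoc] using tendsto_nat_ceil_natCast_mul_div (mul_pos hη0 hri0).le
  have hlt := mul_lt_mul_of_pos_left hrir hη0
  have htail := squeeze_zero'
    (Eventually.of_forall fun N => sum_nonneg fun x _ => hypergeom_nonneg x)
    ((eventually_lt_of_tendsto_div_natCast hmean hk hlt).mono fun N h =>
      sum_filter_lt_hypergeom_le (floor_le hr1 N) (floor_le hη1 N) h)
    (tendsto_div_sub_sq_of_tendsto_div_natCast hmean hk hlt)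
  have h := (tendsto_const_nhds (x := (1 : ℝ))).sub htail
  rw [sub_zero] at h
  exact h.congr fun N => (sum_Icc_hypergeom (floor_le hr1 N) (floor_le hη1 N) _).symm
end
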